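/- arXiv:1511.03977 — 4 statements merged into one kernel-verified Lean document; each statement's English description precedes it below -/
import Mathlib

section
/- Let T : X → Y be a bounded linear operator between Hilbert spaces, α > 0, m ≥ 1, and let g_α(x) = ((x+α)^m - α^m)/(x(x+α)^m). Then for every ψ ∈ Y, ‖g_α(T*T)T*ψ‖² ≤ (sup_{x≥0} |x g_α(x)|)·(sup_{x≥0} |g_α(x)|)·‖ψ‖², and hence ‖g_α(T*T)T*ψ‖ ≤ √(m/α)·‖ψ‖. -/
open ContinuousLinearMap Finset Set

/-!
With `A = T*T` and `C = g(A)` (self-adjoint, as `g` is real), the C*-identity gives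
`‖C T*‖² = ‖C T* (C T*)*‖ = ‖C A C‖ = ‖(x ↦ x g(x)²)(A)‖ ≤ sup |x g(x)| · sup |g(x)|`,
the suprema being over the spectrum of `A`, which lies in `[0, ∞)`.
For the filter function itself, `x g(x) = 1 - (α/(x+α))^m ∈ [0, 1]`, and the geometric-sum
form `g(x) = ∑_{i<m} (x+α)^i α^(m-1-i) / (x+α)^m` shows that `g` is continuous on `[0, ∞)`
with `0 ≤ g(x) ≤ m/(x+α) ≤ m/α`.
-/

section OperatorBound

variable {X Y : Type*} [NormedAddCommGroup X] [InnerProductSpace ℂ X] [CompleteSpace X]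
  [NormedAddCommGroup Y] [InnerProductSpace ℂ Y] [CompleteSpace Y]

theorem norm_cfc_adjoint_comp_self_apply_adjoint_sq_le (T : X →L[ℂ] Y) {f : ℝ → ℝ}
    (hf : ContinuousOn f (spectrum ℝ (adjoint T ∘L T))) {c : ℝ} (hc : 0 ≤ c)
    (hfc : ∀ x ∈ spectrum ℝ (adjoint T ∘L T), |x * f x| * |f x| ≤ c) (ψ : Y) :
    ‖cfc f (adjoint T ∘L T) (adjoint T ψ)‖ ^ 2 ≤ c * ‖ψ‖ ^ 2 := by
  set A := adjoint T ∘L T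
  set C := cfc f A
  have hC : adjoint C = C := (IsSelfAdjoint.cfc : IsSelfAdjoint C)
  have hCAC :
      (C ∘L adjoint T) ∘L adjoint (C ∘L adjoint T) = cfc (fun x => f x * (x * f x)) A := by
    rw [cfc_mul f (fun x => x * f x) A hf (continuousOn_id.mul hf),
      cfc_mul (fun x => x) f A continuousOn_id hf,
      cfc_id' ℝ A (isPositive_adjoint_comp_self T).isSelfAdjoint, adjoint_comp, hC,
      adjoint_adjoint]
    rfl
  have hnorm : ‖C ∘L adjoint T‖ ^ 2 ≤ c := by
    rw [sq, ← LinearIsometryEquiv.norm_map adjoint (C ∘L adjoint T), ← norm_adjoint_comp_self,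
      adjoint_adjoint, hCAC]
    refine norm_cfc_le hc fun x hx => ?_
    rw [Real.norm_eq_abs, abs_mul, mul_comm]
    exact hfc x hx
  calc ‖C (adjoint T ψ)‖ ^ 2 ≤ (‖C ∘L adjoint T‖ * ‖ψ‖) ^ 2 := by
        gcongr
        exact le_opNorm (C ∘L adjoint T) ψ
    _ = ‖C ∘L adjoint T‖ ^ 2 * ‖ψ‖ ^ 2 := mul_pow _ _ _
    _ ≤ c * ‖ψ‖ ^ 2 := by gcongr

theorem spectrum_adjoint_comp_self_subset_Ici (T : X →L[ℂ] Y) :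
    spectrum ℝ (adjoint T ∘L T) ⊆ Ici 0 := fun _ hx =>
  spectrum_nonneg_of_nonneg ((nonneg_iff_isPositive _).mpr (isPositive_adjoint_comp_self T)) hx

end OperatorBound

theorem geom_sum₂_mul_le {R : Type*} [CommSemiring R] [PartialOrder R] [IsOrderedRing R]
    {a b : R} (hb : 0 ≤ b) (hab : b ≤ a) (n : ℕ) :
    (∑ i ∈ range n, a ^ i * b ^ (n - 1 - i)) * a ≤ n * a ^ n := by
  rw [sum_mul]
  refine (sum_le_card_nsmul (range n) _ (a ^ n) fun i hi => ?_).trans_eq (by simp)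
  have hexp : i + (n - 1 - i) + 1 = n := by have := mem_range.mp hi; omega
  have ha : 0 ≤ a := hb.trans hab
  calc a ^ i * b ^ (n - 1 - i) * a ≤ a ^ i * a ^ (n - 1 - i) * a := by gcongr
    _ = a ^ n := by rw [← pow_add, ← pow_succ, hexp]

/-- The filter function of `m`-times iterated Tikhonov regularization, extended continuously
to `x = 0`. -/
noncomputable def iteratedTikhonovFilter (α : ℝ) (m : ℕ) (x : ℝ) : ℝ :=
  if x = 0 then (m : ℝ) / α else ((x + α) ^ m - α ^ m) / (x * (x + α) ^ m)

section IteratedTikhonovFilter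

variable {α : ℝ} {m : ℕ} {x : ℝ}

theorem iteratedTikhonovFilter_eq_geom_sum₂_div (hα : 0 < α) (hx : 0 ≤ x) :
    iteratedTikhonovFilter α m x =
      (∑ i ∈ range m, (x + α) ^ i * α ^ (m - 1 - i)) / (x + α) ^ m := by
  rcases hx.eq_or_lt with rfl | hx
  · rcases m with _ | m
    · simp [iteratedTikhonovFilter]
    · simp only [iteratedTikhonovFilter, if_true, zero_add, geom_sum₂_self]
      rw [Nat.add_sub_cancel, pow_succ]
      field_simp
  · have hgeom :
        (∑ i ∈ range m, (x + α) ^ i * α ^ (m - 1 - i)) * x = (x + α) ^ m - α ^ m := by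
      simpa using geom_sum₂_mul (x + α) α m
    rw [iteratedTikhonovFilter, if_neg hx.ne', ← hgeom, mul_comm x,
      mul_div_mul_right _ _ hx.ne']

theorem continuousOn_iteratedTikhonovFilter (hα : 0 < α) :
    ContinuousOn (iteratedTikhonovFilter α m) (Ici 0) := by
  refine ContinuousOn.congr ?_ fun x hx => iteratedTikhonovFilter_eq_geom_sum₂_div hα hx
  refine ContinuousOn.div (by fun_prop) (by fun_prop) fun x hx => ?_
  have : 0 < x + α := by linarith [mem_Ici.mp hx]
  positivity

theorem abs_mul_iteratedTikhonovFilter_le_one (hα : 0 < α) (hx : 0 ≤ x) :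
    |x * iteratedTikhonovFilter α m x| ≤ 1 := by
  rcases hx.eq_or_lt with rfl | hx
  · simp
  have hpow : α ^ m ≤ (x + α) ^ m := pow_le_pow_left₀ hα.le (by linarith) m
  have hpos : 0 < (x + α) ^ m := by positivity
  rw [iteratedTikhonovFilter, if_neg hx.ne', mul_div_assoc', mul_div_mul_left _ _ hx.ne',
    abs_of_nonneg (div_nonneg (by linarith) hpos.le), div_le_one hpos]
  linarith [pow_pos hα m]

theorem abs_iteratedTikhonovFilter_le (hα : 0 < α) (hx : 0 ≤ x) :
    |iteratedTikhonovFilter α m x| ≤ m / α := by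
  have hxα : 0 < x + α := by linarith
  have hsum := geom_sum₂_mul_le hα.le (by linarith : α ≤ x + α) m
  rw [iteratedTikhonovFilter_eq_geom_sum₂_div hα hx, abs_of_nonneg (by positivity),
    div_le_div_iff₀ (by positivity) hα]
  calc (∑ i ∈ range m, (x + α) ^ i * α ^ (m - 1 - i)) * α
      ≤ (∑ i ∈ range m, (x + α) ^ i * α ^ (m - 1 - i)) * (x + α) := by gcongr; linarith
    _ ≤ m * (x + α) ^ m := hsum

end IteratedTikhonovFilter

theorem stmt_4_general {X Y : Type*} [NormedAddCommGroup X] [InnerProductSpace ℂ X] [CompleteSpace X]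
    [NormedAddCommGroup Y] [InnerProductSpace ℂ Y] [CompleteSpace Y]
    (T : X →L[ℂ] Y) (α : ℝ) (m : ℕ) (hα : 0 < α)
    (g : ℝ → ℝ)
    (hg : ∀ x : ℝ, g x = if x = 0 then (m : ℝ) / α else ((x + α) ^ m - α ^ m) / (x * (x + α) ^ m))
    (ψ : Y) :
    ‖(cfc g (ContinuousLinearMap.adjoint T ∘L T)) (ContinuousLinearMap.adjoint T ψ)‖ ^ 2 ≤
        (⨆ x : {x : ℝ // 0 ≤ x}, |(x : ℝ) * g x|) * (⨆ x : {x : ℝ // 0 ≤ x}, |g x|) * ‖ψ‖ ^ 2 ∧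
      ‖(cfc g (ContinuousLinearMap.adjoint T ∘L T)) (ContinuousLinearMap.adjoint T ψ)‖ ≤
        Real.sqrt ((m : ℝ) / α) * ‖ψ‖ := by
  obtain rfl : g = iteratedTikhonovFilter α m := funext hg
  have hspec := spectrum_adjoint_comp_self_subset_Ici T
  have hbdd₁ :
      BddAbove (range fun x : {x : ℝ // 0 ≤ x} => |x * iteratedTikhonovFilter α m x|) :=
    ⟨1, forall_mem_range.mpr fun x => abs_mul_iteratedTikhonovFilter_le_one hα x.2⟩
  have hbdd₂ : BddAbove (range fun x : {x : ℝ // 0 ≤ x} => |iteratedTikhonovFilter α m x|) :=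
    ⟨m / α, forall_mem_range.mpr fun x => abs_iteratedTikhonovFilter_le hα x.2⟩
  have hsup₁_nonneg := Real.iSup_nonneg fun x : {x : ℝ // 0 ≤ x} =>
    abs_nonneg (x * iteratedTikhonovFilter α m x)
  have hsup₂_nonneg := Real.iSup_nonneg fun x : {x : ℝ // 0 ≤ x} =>
    abs_nonneg (iteratedTikhonovFilter α m x)
  have hmain := norm_cfc_adjoint_comp_self_apply_adjoint_sq_le T
    ((continuousOn_iteratedTikhonovFilter hα).mono hspec)
    (mul_nonneg hsup₁_nonneg hsup₂_nonneg)
    (fun x hx => mul_le_mul (le_ciSup hbdd₁ ⟨x, hspec hx⟩)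
      (le_ciSup hbdd₂ ⟨x, hspec hx⟩) (abs_nonneg _) hsup₁_nonneg) ψ
  refine ⟨hmain, (pow_le_pow_iff_left₀ (norm_nonneg _) (by positivity) two_ne_zero).mp ?_⟩
  calc _ ≤ _ := hmain
    _ ≤ 1 * (m / α) * ‖ψ‖ ^ 2 := by
        gcongr
        exacts [ciSup_le fun x => abs_mul_iteratedTikhonovFilter_le_one hα x.2,
          ciSup_le fun x => abs_iteratedTikhonovFilter_le hα x.2]
    _ = (√(m / α) * ‖ψ‖) ^ 2 := by rw [one_mul, mul_pow, Real.sq_sqrt (by positivity)]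

/-- Let `T : X → Y` be a bounded linear operator between Hilbert spaces, `α > 0`, `m ≥ 1`,
and `g_α(x) = ((x+α)^m − α^m)/(x(x+α)^m)` (with `g_α(0) = m/α`). Then for every `ψ ∈ Y`,
`‖g_α(T*T)T*ψ‖² ≤ (sup_{x≥0}|x g_α(x)|)·(sup_{x≥0}|g_α(x)|)·‖ψ‖²`, and hence
`‖g_α(T*T)T*ψ‖ ≤ √(m/α)·‖ψ‖`. -/
theorem stmt_4 {X Y : Type*} [NormedAddCommGroup X] [InnerProductSpace ℂ X] [CompleteSpace X]
    [NormedAddCommGroup Y] [InnerProductSpace ℂ Y] [CompleteSpace Y]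
    (T : X →L[ℂ] Y) (α : ℝ) (m : ℕ) (hα : 0 < α) (hm : 1 ≤ m)
    (g : ℝ → ℝ)
    (hg : ∀ x : ℝ, g x = if x = 0 then (m : ℝ) / α else ((x + α) ^ m - α ^ m) / (x * (x + α) ^ m))
    (ψ : Y) :
    ‖(cfc g (ContinuousLinearMap.adjoint T ∘L T)) (ContinuousLinearMap.adjoint T ψ)‖ ^ 2 ≤
        (⨆ x : {x : ℝ // 0 ≤ x}, |(x : ℝ) * g x|) * (⨆ x : {x : ℝ // 0 ≤ x}, |g x|) * ‖ψ‖ ^ 2 ∧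
      ‖(cfc g (ContinuousLinearMap.adjoint T ∘L T)) (ContinuousLinearMap.adjoint T ψ)‖ ≤
        Real.sqrt ((m : ℝ) / α) * ‖ψ‖ :=
  stmt_4_general T α m hα g hg ψ
end

section
/- (McDiarmid's inequality) Let W₁,…,W_n be independent random variables and f a function of (W₁,…,W_n) such that changing the i-th coordinate changes f by at most c_i. Then for every t ≥ 0, P(|f(W₁,…,W_n) − E f(W₁,…,W_n)| ≥ t) ≤ 2 exp(−2t² / Σᵢ c_i²). -/
open MeasureTheory ProbabilityTheory

/-!
McDiarmid's inequality by tensorising sub-Gaussian moment generating functions. Split a point of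
`∏ Xᵢ` as `(a, y)` with `a` its first coordinate. For fixed `y`, `a ↦ f (a, y)` oscillates by at
most `c₀`, so by Hoeffding's lemma `f (a, y) - g y` is sub-Gaussian with variance proxy `(c₀/2)²`,
where `g y` is the average of `f (·, y)`. The function `g` has bounded differences `c₁, …, cₙ`, so
by induction `g - E g` is sub-Gaussian with proxy `∑_{i ≥ 1} (cᵢ/2)²`, and Fubini adds the two
proxies. Independence makes the law of `(W₁, …, Wₙ)` the product measure, and the Chernoff bound
on both tails gives `2 exp (-t² / (2 ∑ (cᵢ/2)²)) = 2 exp (-2t² / ∑ cᵢ²)`.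
-/

open Real
open scoped NNReal

lemma exists_forall_mem_Icc_of_sub_le {α : Type*} {X : α → ℝ} {c : ℝ}
    (h : ∀ x y, X x - X y ≤ c) : ∃ a, ∀ x, X x ∈ Set.Icc a (a + c) := by
  rcases isEmpty_or_nonempty α with hα | hα
  · exact ⟨0, isEmptyElim⟩
  obtain ⟨x₀⟩ := id hα
  have hbdd : BddBelow (Set.range X) := ⟨X x₀ - c, by
    rintro _ ⟨y, rfl⟩
    linarith [h x₀ y]⟩
  refine ⟨⨅ x, X x, fun x => ⟨ciInf_le hbdd x, ?_⟩⟩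
  have : X x - c ≤ ⨅ y, X y := le_ciInf fun y => by linarith [h x y]
  linarith

lemma Measurable.comp_insertNth {n : ℕ} {X : Fin (n + 1) → Type*} [∀ i, MeasurableSpace (X i)]
    {f : (∀ i, X i) → ℝ} (hf : Measurable f) (p : Fin (n + 1)) (y : ∀ j, X (p.succAbove j)) :
    Measurable fun a : X p => f (p.insertNth a y) :=
  hf.comp ((MeasurableEquiv.piFinSuccAbove X p).symm.measurable.comp measurable_prodMk_right)

namespace ProbabilityTheory

section

variable {Ω : Type*} {mΩ : MeasurableSpace Ω} {μ : Measure Ω}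

lemma integrable_of_forall_sub_le [IsFiniteMeasure μ] {X : Ω → ℝ} (hX : AEMeasurable X μ)
    {c : ℝ} (h : ∀ x y, X x - X y ≤ c) : Integrable X μ := by
  obtain ⟨a, ha⟩ := exists_forall_mem_Icc_of_sub_le h
  exact Integrable.of_mem_Icc a (a + c) hX (ae_of_all _ ha)

lemma hasSubgaussianMGF_sub_integral_of_forall_sub_le [IsProbabilityMeasure μ] {X : Ω → ℝ}
    (hX : AEMeasurable X μ) {c : ℝ} (h : ∀ x y, X x - X y ≤ c) :
    HasSubgaussianMGF (fun ω => X ω - μ[X]) ((‖c‖₊ / 2) ^ 2) μ := by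
  obtain ⟨a, ha⟩ := exists_forall_mem_Icc_of_sub_le h
  simpa using hasSubgaussianMGF_of_mem_Icc hX (ae_of_all _ ha)

lemma HasSubgaussianMGF.measureReal_abs_ge_le [IsFiniteMeasure μ] {X : Ω → ℝ} {c : ℝ≥0}
    (h : HasSubgaussianMGF X c μ) {ε : ℝ} (hε : 0 ≤ ε) :
    μ.real {ω | ε ≤ |X ω|} ≤ 2 * exp (-ε ^ 2 / (2 * c)) := by
  calc μ.real {ω | ε ≤ |X ω|} ≤ μ.real ({ω | ε ≤ X ω} ∪ {ω | ε ≤ (-X) ω}) :=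
        measureReal_mono fun ω (hω : ε ≤ |X ω|) => le_abs.1 hω
    _ ≤ μ.real {ω | ε ≤ X ω} + μ.real {ω | ε ≤ (-X) ω} := measureReal_union_le _ _
    _ ≤ 2 * exp (-ε ^ 2 / (2 * c)) := by
      linarith [h.measure_ge_le hε, h.neg.measure_ge_le hε]

end

lemma hasSubgaussianMGF_prod_of_fiberwise {α β : Type*} {mα : MeasurableSpace α}
    {mβ : MeasurableSpace β} {μ : Measure α} {ν : Measure β} [SFinite μ] [SFinite ν]
    {F : α × β → ℝ} (hF : Measurable F) {g : β → ℝ} {cA cB : ℝ≥0}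
    (hA : ∀ y, HasSubgaussianMGF (fun x => F (x, y) - g y) cA μ)
    (hB : HasSubgaussianMGF g cB ν) :
    HasSubgaussianMGF F (cA + cB) (μ.prod ν) := by
  have hfiber (t : ℝ) (y : β) :
      ∫ x, exp (t * F (x, y)) ∂μ = mgf (fun x => F (x, y) - g y) μ t * exp (t * g y) := by
    rw [mgf, ← integral_mul_const]
    congr with x
    rw [← exp_add]
    ring_nf
  have hfiber_le (t : ℝ) (y : β) :
      ∫ x, exp (t * F (x, y)) ∂μ ≤ exp (cA * t ^ 2 / 2) * exp (t * g y) := by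
    rw [hfiber]
    exact mul_le_mul_of_nonneg_right ((hA y).mgf_le t) (exp_pos _).le
  have hexp_meas (t : ℝ) : Measurable fun p => exp (t * F p) := by fun_prop
  have hint_fiber (t : ℝ) : Integrable (fun y => ∫ x, exp (t * F (x, y)) ∂μ) ν := by
    refine ((hB.integrable_exp_mul t).const_mul (exp (cA * t ^ 2 / 2))).mono'
      (hexp_meas t).stronglyMeasurable.integral_prod_left'.aestronglyMeasurable
      (ae_of_all _ fun y => ?_)
    rw [Real.norm_of_nonneg (integral_nonneg fun x => (exp_pos _).le)]
    exact hfiber_le t y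
  have hint (t : ℝ) : Integrable (fun p => exp (t * F p)) (μ.prod ν) := by
    refine (integrable_prod_iff' (hexp_meas t).aestronglyMeasurable).2
      ⟨ae_of_all _ fun y => ?_, ?_⟩
    · refine (((hA y).integrable_exp_mul t).mul_const (exp (t * g y))).congr
        (ae_of_all _ fun x => ?_)
      simp only [← exp_add]
      ring_nf
    · simpa only [Real.norm_of_nonneg (exp_pos _).le] using hint_fiber t
  refine ⟨hint, fun t => ?_⟩
  calc mgf F (μ.prod ν) t = ∫ y, ∫ x, exp (t * F (x, y)) ∂μ ∂ν := integral_prod_symm _ (hint t)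
    _ ≤ ∫ y, exp (cA * t ^ 2 / 2) * exp (t * g y) ∂ν :=
      integral_mono (hint_fiber t) ((hB.integrable_exp_mul t).const_mul _) (hfiber_le t)
    _ = exp (cA * t ^ 2 / 2) * mgf g ν t := integral_const_mul _ _
    _ ≤ exp (cA * t ^ 2 / 2) * exp (cB * t ^ 2 / 2) := by gcongr; exact hB.mgf_le t
    _ = exp ((cA + cB : ℝ≥0) * t ^ 2 / 2) := by rw [← exp_add]; push_cast; ring_nf

end ProbabilityTheory

def BoundedDifferences {ι : Type*} [DecidableEq ι] {X : ι → Type*} (f : (∀ i, X i) → ℝ)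
    (c : ι → ℝ) : Prop :=
  ∀ (i : ι) (w : ∀ j, X j) (w' : X i), |f w - f (Function.update w i w')| ≤ c i

namespace BoundedDifferences

section insertNth

variable {n : ℕ} {X : Fin (n + 1) → Type*} {f : (∀ i, X i) → ℝ} {c : Fin (n + 1) → ℝ}

lemma insertNth_sub_insertNth_le (hf : BoundedDifferences f c) (p : Fin (n + 1)) (a a' : X p)
    (y : ∀ j, X (p.succAbove j)) : f (p.insertNth a y) - f (p.insertNth a' y) ≤ c p := by
  rw [← Fin.update_insertNth p a a' y]
  exact (le_abs_self _).trans (hf p _ a')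

lemma integral_insertNth [∀ i, MeasurableSpace (X i)] (hf : BoundedDifferences f c)
    (hfm : Measurable f) (p : Fin (n + 1)) (μ : Measure (X p)) [IsProbabilityMeasure μ] :
    BoundedDifferences (fun y => ∫ a, f (p.insertNth a y) ∂μ) (fun j => c (p.succAbove j)) := by
  intro j y b
  have hint (y : ∀ j, X (p.succAbove j)) : Integrable (fun a => f (p.insertNth a y)) μ :=
    integrable_of_forall_sub_le (hfm.comp_insertNth p y).aemeasurable
      (hf.insertNth_sub_insertNth_le p · · y)
  rw [← integral_sub (hint _) (hint _)]
  calc |∫ a, f (p.insertNth a y) - f (p.insertNth a (Function.update y j b)) ∂μ|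
      ≤ ∫ a, |f (p.insertNth a y) - f (p.insertNth a (Function.update y j b))| ∂μ :=
        abs_integral_le_integral_abs
    _ ≤ ∫ _, c (p.succAbove j) ∂μ := by
      refine integral_mono ((hint _).sub (hint _)).abs (integrable_const _) fun a => ?_
      simp only [Fin.insertNth_update]
      exact hf _ _ _
    _ = c (p.succAbove j) := by simp

end insertNth

theorem hasSubgaussianMGF_pi {n : ℕ} {X : Fin n → Type*} [∀ i, MeasurableSpace (X i)]
    {f : (∀ i, X i) → ℝ} {c : Fin n → ℝ} (hf : BoundedDifferences f c) (hfm : Measurable f)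
    (μ : ∀ i, Measure (X i)) [∀ i, IsProbabilityMeasure (μ i)] :
    HasSubgaussianMGF (fun x => f x - ∫ y, f y ∂Measure.pi μ) (∑ i, (‖c i‖₊ / 2) ^ 2)
      (Measure.pi μ) := by
  induction n with
  | zero =>
    have hconst (x : ∀ i, X i) : f x = f isEmptyElim := congrArg f (Subsingleton.elim _ _)
    simp [hconst]
  | succ n ih =>
    set e := MeasurableEquiv.piFinSuccAbove X 0
    set ν := Measure.pi fun j => μ ((0 : Fin (n + 1)).succAbove j)
    have he : MeasurePreserving e (Measure.pi μ) ((μ 0).prod ν) :=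
      measurePreserving_piFinSuccAbove μ 0
    set F : X 0 × (∀ j, X ((0 : Fin (n + 1)).succAbove j)) → ℝ := f ∘ e.symm
    have hFm : Measurable F := hfm.comp e.symm.measurable
    set g := fun y => ∫ a, F (a, y) ∂μ 0
    have hg : HasSubgaussianMGF (fun y => g y - ∫ y', g y' ∂ν)
        (∑ j, (‖c ((0 : Fin (n + 1)).succAbove j)‖₊ / 2) ^ 2) ν :=
      ih (hf.integral_insertNth hfm 0 (μ 0))
        hFm.stronglyMeasurable.integral_prod_left'.measurable _
    have hfiber (y : ∀ j, X ((0 : Fin (n + 1)).succAbove j)) : HasSubgaussianMGF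
        (fun a => (F (a, y) - ∫ y', g y' ∂ν) - (g y - ∫ y', g y' ∂ν)) ((‖c 0‖₊ / 2) ^ 2) (μ 0) := by
      simp only [sub_sub_sub_cancel_right]
      exact hasSubgaussianMGF_sub_integral_of_forall_sub_le
        (hfm.comp_insertNth 0 y).aemeasurable (hf.insertNth_sub_insertNth_le 0 · · y)
    have hprod := hasSubgaussianMGF_prod_of_fiberwise (hFm.sub measurable_const) hfiber hg
    have hmean : ∫ x, f x ∂Measure.pi μ = ∫ y, g y ∂ν := by
      have hFint : Integrable F ((μ 0).prod ν) := by
        simpa only [sub_add_cancel] using hprod.integrable.add (integrable_const (∫ y, g y ∂ν))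
      calc ∫ x, f x ∂Measure.pi μ
          = ∫ x, F (e x) ∂Measure.pi μ := by
            simp only [F, Function.comp_apply, MeasurableEquiv.symm_apply_apply]
        _ = ∫ p, F p ∂(μ 0).prod ν := he.integral_comp' F
        _ = ∫ y, g y ∂ν := integral_prod_symm F hFint
    rw [Fin.sum_univ_succAbove _ 0, hmean]
    rw [← he.map_eq] at hprod
    refine (hprod.of_map he.measurable.aemeasurable).congr (ae_of_all _ fun x => ?_)
    simp only [F, Pi.sub_apply, Function.comp_apply, MeasurableEquiv.symm_apply_apply]

end BoundedDifferences

theorem stmt_7_general {Ω : Type*} [MeasurableSpace Ω] (P : Measure Ω)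
    {n : ℕ} {𝒳 : Fin n → Type*} [∀ i, MeasurableSpace (𝒳 i)]
    (W : ∀ i, Ω → 𝒳 i) (hWmeas : ∀ i, Measurable (W i))
    (hindep : iIndepFun W P)
    (f : (∀ i, 𝒳 i) → ℝ) (hf : Measurable f)
    (c : Fin n → ℝ)
    (hbdd : ∀ (i : Fin n) (w : ∀ j, 𝒳 j) (w' : 𝒳 i),
      |f w - f (Function.update w i w')| ≤ c i)
    (t : ℝ) (ht : 0 ≤ t) :
    P {ω | t ≤ |f (fun i => W i ω) - ∫ ω', f (fun i => W i ω') ∂P|} ≤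
      ENNReal.ofReal (2 * Real.exp (-2 * t ^ 2 / ∑ i, (c i) ^ 2)) := by
  have := hindep.isProbabilityMeasure
  have (i : Fin n) : IsProbabilityMeasure (P.map (W i)) :=
    Measure.isProbabilityMeasure_map (hWmeas i).aemeasurable
  have hW : Measurable fun ω i => W i ω := measurable_pi_lambda _ hWmeas
  have hlaw : P.map (fun ω i => W i ω) = Measure.pi fun i => P.map (W i) :=
    hindep.map_fun_eq_pi_map fun i => (hWmeas i).aemeasurable
  have hsub := BoundedDifferences.hasSubgaussianMGF_pi hbdd hf fun i => P.map (W i)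
  rw [← hlaw, integral_map hW.aemeasurable hf.aestronglyMeasurable] at hsub
  have htail := (hsub.of_map hW.aemeasurable).measureReal_abs_ge_le ht
  have hproxy : 2 * ((∑ i, (‖c i‖₊ / 2) ^ 2 : ℝ≥0) : ℝ) = (∑ i, c i ^ 2) / 2 := by
    push_cast
    simp only [Real.norm_eq_abs, div_pow, sq_abs, ← Finset.sum_div]
    ring
  rw [← ofReal_measureReal]
  refine ENNReal.ofReal_le_ofReal (htail.trans_eq ?_)
  rw [hproxy, div_div_eq_mul_div]
  ring_nf

/-- McDiarmid's inequality: let `W₁, …, Wₙ` be independent random variables and `f` a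
measurable function of `(W₁, …, Wₙ)` satisfying the bounded differences condition with
constants `c i`. Then for every `t ≥ 0`,
`P(|f(W) − E f(W)| ≥ t) ≤ 2 exp(−2t²/Σ cᵢ²)`. -/
theorem stmt_7 {Ω : Type*} [MeasurableSpace Ω] (P : Measure Ω) [IsProbabilityMeasure P]
    {n : ℕ} {𝒳 : Fin n → Type*} [∀ i, MeasurableSpace (𝒳 i)]
    (W : ∀ i, Ω → 𝒳 i) (hWmeas : ∀ i, Measurable (W i))
    (hindep : iIndepFun W P)
    (f : (∀ i, 𝒳 i) → ℝ) (hf : Measurable f)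
    (c : Fin n → ℝ)
    (hbdd : ∀ (i : Fin n) (w : ∀ j, 𝒳 j) (w' : 𝒳 i),
      |f w - f (Function.update w i w')| ≤ c i)
    (t : ℝ) (ht : 0 ≤ t) :
    P {ω | t ≤ |f (fun i => W i ω) - ∫ ω', f (fun i => W i ω') ∂P|} ≤
      ENNReal.ofReal (2 * Real.exp (-2 * t ^ 2 / ∑ i, (c i) ^ 2)) :=
  stmt_7_general P W hWmeas hindep f hf c hbdd t ht
end

section
/- Under the Lipschitz condition ‖F'[ξ₁] − F'[ξ₂]‖ ≤ L‖ξ₁ − ξ₂‖ and the spectral bound ‖[r_α(A*A) − r_α(B*B)](B*B)^μ‖ ≤ C_μ‖A − B‖ for μ ≥ 1/2, the nonlinearity error e^{nl}_{j+1} := g_{α_j}(T_j^*T_j)T_j^*[F(φ†) − F(φ_j) + T_j(φ_j − φ†)] + [r_{α_j}(T_j^*T_j) − r_{α_j}(T_†^*T_†)](T_†^*T_†)^μ ω satisfies ‖e^{nl}_{j+1}‖ ≤ (L√C_g / (2√α_j))‖e_j‖² + C_μ ρ L ‖e_j‖, where e_j = φ_j − φ†, T_j = F'[φ_j], T_† =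 F'[φ†], ρ ≥ ‖ω‖. -/
open ContinuousLinearMap

/-! The Taylor remainder `F φ† − F φⱼ − Tⱼ(φ† − φⱼ)` of a map with `L`-Lipschitz derivative is
at most `L/2 ‖eⱼ‖²`, and `‖Tⱼ − T†‖ ≤ L‖eⱼ‖`. Feeding these into the two assumed operator
bounds and applying the triangle inequality gives the two terms of the estimate. The factor
`1/2` comes from comparing `t ↦ F(a + t(b − a)) − t F'(a)(b − a)` with the parabola
`t ↦ L‖b − a‖² t²/2` on `[0, 1]`. -/

section Taylor

variable {𝕜 X Y : Type*} [NontriviallyNormedField 𝕜] [NormedAlgebra ℝ 𝕜]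
  [NormedAddCommGroup X] [NormedSpace 𝕜 X] [NormedSpace ℝ X] [IsScalarTower ℝ 𝕜 X]
  [NormedAddCommGroup Y] [NormedSpace 𝕜 Y] [NormedSpace ℝ Y] [IsScalarTower ℝ 𝕜 Y]
  {F : X → Y} {F' : X → X →L[𝕜] Y} {L : ℝ}

theorem hasDerivAt_sub_fderiv_along_segment (hF : ∀ x, HasFDerivAt F (F' x) x) (a d : X)
    (t : ℝ) :
    HasDerivAt (fun t : ℝ => F (a + t • d) - t • F' a d) (F' (a + t • d) d - F' a d) t := by
  have hline : HasDerivAt (fun t : ℝ => a + t • d) d t := by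
    simpa using ((hasDerivAt_id t).smul_const d).const_add a
  have hcomp := ((hF (a + t • d)).restrictScalars ℝ).comp_hasDerivAt t hline
  have hlin : HasDerivAt (fun t : ℝ => t • F' a d) (F' a d) t := by
    simpa using (hasDerivAt_id t).smul_const (F' a d)
  exact hcomp.sub hlin

theorem norm_sub_sub_fderiv_le_of_lipschitz_fderiv (hF : ∀ x, HasFDerivAt F (F' x) x)
    (hF' : ∀ ξ₁ ξ₂, ‖F' ξ₁ - F' ξ₂‖ ≤ L * ‖ξ₁ - ξ₂‖) (a b : X) :
    ‖F b - F a - F' a (b - a)‖ ≤ L / 2 * ‖b - a‖ ^ 2 := by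
  set d := b - a
  let f : ℝ → Y := fun t => F (a + t • d) - t • F' a d - F a
  have hf : ∀ t, HasDerivAt f (F' (a + t • d) d - F' a d) t := fun t =>
    (hasDerivAt_sub_fderiv_along_segment hF a d t).sub_const (F a)
  have hparabola : ∀ t, HasDerivAt (fun t : ℝ => L * ‖d‖ ^ 2 * t ^ 2 / 2) (L * ‖d‖ ^ 2 * t) t :=
    fun t => (((hasDerivAt_pow 2 t).const_mul _).div_const 2).congr_deriv (by ring)
  have hslope : ∀ t ∈ Set.Ico (0 : ℝ) 1, ‖F' (a + t • d) d - F' a d‖ ≤ L * ‖d‖ ^ 2 * t := by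
    intro t ht
    have hlip := hF' (a + t • d) a
    rw [add_sub_cancel_left, norm_smul, Real.norm_of_nonneg ht.1] at hlip
    calc ‖F' (a + t • d) d - F' a d‖ ≤ ‖F' (a + t • d) - F' a‖ * ‖d‖ :=
          (F' (a + t • d) - F' a).le_opNorm d
      _ ≤ L * (t * ‖d‖) * ‖d‖ := by gcongr
      _ = L * ‖d‖ ^ 2 * t := by ring
  have hf1 := image_norm_le_of_norm_deriv_right_le_deriv_boundary
    (fun t _ => (hf t).continuousAt.continuousWithinAt) (fun t _ => (hf t).hasDerivWithinAt)
    (by simp [f]) hparabola hslope (Set.right_mem_Icc.2 zero_le_one)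
  have hf_one : f 1 = F b - F a - F' a (b - a) := by
    simp only [f, d, one_smul, add_sub_cancel, sub_right_comm]
  rw [hf_one] at hf1
  linarith

end Taylor

theorem stmt_12_general {X Y : Type*} [NormedAddCommGroup X] [InnerProductSpace ℂ X] [CompleteSpace X]
    [NormedAddCommGroup Y] [InnerProductSpace ℂ Y] [CompleteSpace Y]
    (F : X → Y) (F' : X → (X →L[ℂ] Y)) (L Cg Cμ αj μ ρ : ℝ)
    (hCμ : 0 < Cμ) (hαj : 0 < αj)
    (hdiff : ∀ x : X, HasFDerivAt F (F' x) x)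
    (hlip : ∀ ξ₁ ξ₂ : X, ‖F' ξ₁ - F' ξ₂‖ ≤ L * ‖ξ₁ - ξ₂‖)
    (g r : ℝ → ℝ) (φdag φj : X) (ω : X) (hρ : ‖ω‖ ≤ ρ)
    (Tj Tdag : X →L[ℂ] Y) (hTj : Tj = F' φj) (hTdag : Tdag = F' φdag)
    (hg : ∀ ψ : Y,
      ‖(cfc g (ContinuousLinearMap.adjoint Tj ∘L Tj)) (ContinuousLinearMap.adjoint Tj ψ)‖ ≤
        Real.sqrt (Cg / αj) * ‖ψ‖)
    (hr : ∀ v : X,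
      ‖(cfc r (ContinuousLinearMap.adjoint Tj ∘L Tj) -
          cfc r (ContinuousLinearMap.adjoint Tdag ∘L Tdag))
          ((cfc (fun x : ℝ => x ^ μ) (ContinuousLinearMap.adjoint Tdag ∘L Tdag)) v)‖ ≤
        Cμ * ‖Tj - Tdag‖ * ‖v‖) :
    ‖(cfc g (ContinuousLinearMap.adjoint Tj ∘L Tj))
        (ContinuousLinearMap.adjoint Tj (F φdag - F φj + Tj (φj - φdag))) +
      (cfc r (ContinuousLinearMap.adjoint Tj ∘L Tj) -
          cfc r (ContinuousLinearMap.adjoint Tdag ∘L Tdag))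
        ((cfc (fun x : ℝ => x ^ μ) (ContinuousLinearMap.adjoint Tdag ∘L Tdag)) ω)‖ ≤
      (L * Real.sqrt Cg / (2 * Real.sqrt αj)) * ‖φj - φdag‖ ^ 2 + Cμ * ρ * L * ‖φj - φdag‖ := by
  have hTaylor : ‖F φdag - F φj + Tj (φj - φdag)‖ ≤ L / 2 * ‖φj - φdag‖ ^ 2 := by
    rw [hTj, norm_sub_rev φj φdag, ← neg_sub φdag φj, map_neg, ← sub_eq_add_neg]
    exact norm_sub_sub_fderiv_le_of_lipschitz_fderiv hdiff hlip φj φdag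
  have hT : ‖Tj - Tdag‖ ≤ L * ‖φj - φdag‖ := hTj ▸ hTdag ▸ hlip φj φdag
  refine (norm_add_le _ _).trans (add_le_add ?_ ?_)
  · calc _ ≤ Real.sqrt (Cg / αj) * ‖F φdag - F φj + Tj (φj - φdag)‖ := hg _
      _ ≤ Real.sqrt (Cg / αj) * (L / 2 * ‖φj - φdag‖ ^ 2) := by gcongr
      _ = L * Real.sqrt Cg / (2 * Real.sqrt αj) * ‖φj - φdag‖ ^ 2 := by
        rw [Real.sqrt_div' _ hαj.le]; ring
  · calc _ ≤ Cμ * ‖Tj - Tdag‖ * ‖ω‖ := hr ω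
      _ ≤ Cμ * (L * ‖φj - φdag‖) * ρ := by
        gcongr; exact mul_nonneg hCμ.le ((norm_nonneg _).trans hT)
      _ = Cμ * ρ * L * ‖φj - φdag‖ := by ring

/-- Bound for the nonlinearity error of the IRGNM: under the Lipschitz condition
`‖F'[ξ₁] − F'[ξ₂]‖ ≤ L‖ξ₁ − ξ₂‖`, the bound `‖g_α(T_j*T_j)T_j*ψ‖ ≤ √(C_g/α_j)‖ψ‖`, and
the spectral bound `‖[r_α(T_j*T_j) − r_α(T_†*T_†)](T_†*T_†)^μ v‖ ≤ C_μ‖T_j − T_†‖‖v‖`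
for `μ ≥ 1/2`, the nonlinearity error
`e^{nl} = g_α(T_j*T_j)T_j*[F(φ†) − F(φ_j) + T_j(φ_j − φ†)]
        + [r_α(T_j*T_j) − r_α(T_†*T_†)](T_†*T_†)^μ ω`
satisfies `‖e^{nl}‖ ≤ (L√C_g/(2√α_j))‖e_j‖² + C_μ ρ L ‖e_j‖` where `e_j = φ_j − φ†` and
`ρ ≥ ‖ω‖`. -/
theorem stmt_12 {X Y : Type*} [NormedAddCommGroup X] [InnerProductSpace ℂ X] [CompleteSpace X]
    [NormedAddCommGroup Y] [InnerProductSpace ℂ Y] [CompleteSpace Y]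
    (F : X → Y) (F' : X → (X →L[ℂ] Y)) (L Cg Cμ αj μ ρ : ℝ)
    (hL : 0 < L) (hCg : 0 < Cg) (hCμ : 0 < Cμ) (hαj : 0 < αj) (hμ : 1 / 2 ≤ μ)
    (hdiff : ∀ x : X, HasFDerivAt F (F' x) x)
    (hlip : ∀ ξ₁ ξ₂ : X, ‖F' ξ₁ - F' ξ₂‖ ≤ L * ‖ξ₁ - ξ₂‖)
    (g r : ℝ → ℝ) (φdag φj : X) (ω : X) (hρ : ‖ω‖ ≤ ρ)
    (Tj Tdag : X →L[ℂ] Y) (hTj : Tj = F' φj) (hTdag : Tdag = F' φdag)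
    (hg : ∀ ψ : Y,
      ‖(cfc g (ContinuousLinearMap.adjoint Tj ∘L Tj)) (ContinuousLinearMap.adjoint Tj ψ)‖ ≤
        Real.sqrt (Cg / αj) * ‖ψ‖)
    (hr : ∀ v : X,
      ‖(cfc r (ContinuousLinearMap.adjoint Tj ∘L Tj) -
          cfc r (ContinuousLinearMap.adjoint Tdag ∘L Tdag))
          ((cfc (fun x : ℝ => x ^ μ) (ContinuousLinearMap.adjoint Tdag ∘L Tdag)) v)‖ ≤
        Cμ * ‖Tj - Tdag‖ * ‖v‖) :
    ‖(cfc g (ContinuousLinearMap.adjoint Tj ∘L Tj))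
        (ContinuousLinearMap.adjoint Tj (F φdag - F φj + Tj (φj - φdag))) +
      (cfc r (ContinuousLinearMap.adjoint Tj ∘L Tj) -
          cfc r (ContinuousLinearMap.adjoint Tdag ∘L Tdag))
        ((cfc (fun x : ℝ => x ^ μ) (ContinuousLinearMap.adjoint Tdag ∘L Tdag)) ω)‖ ≤
      (L * Real.sqrt Cg / (2 * Real.sqrt αj)) * ‖φj - φdag‖ ^ 2 + Cμ * ρ * L * ‖φj - φdag‖ :=
  stmt_12_general F F' L Cg Cμ αj μ ρ hCμ hαj hdiff hlip g r φdag φj ω hρ Tj Tdag hTj hTdag hg hr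
end

section
/- Let a_j be nonincreasing with a_j ≤ γ a_{j+1}, and Φ(j) increasing with Φ(j+1)/Φ(j) ≤ q^{−1/2} (for q ∈ (0,1)). Let {φ_j}_{j≤J_max} be elements of a Hilbert space satisfying ‖φ_j − φ†‖ ≤ (1+γ')(a_j + Φ(j)) for all j ≤ J_max, where γ' ≤ 1. Define the Lepskiĭ index J_Lep := min{ j ≤ J_max : ‖φ_i − φ_j‖ ≤ 4(1+γ')Φ(i) for all i with j ≤ i ≤ J_max }. Then ‖φ_{J_Lep} − φ†‖ ≤ 6 q^{−1/2} (1+γ') min_{j ≤ J_max} (a_j + Φ(j)). -/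
/-!
Let `j₀` be the first index with `a j₀ ≤ Φ j₀` (or `J_max` if there is none). For `i ≥ j₀` both
`φ_i` and `φ_{j₀}` lie within `2(1+γ')Φ(i)` of `φ†`, so `j₀` passes the Lepskiĭ test and
`J_Lep ≤ j₀`. Hence `φ_{J_Lep}` is within `4(1+γ')Φ(j₀)` of `φ_{j₀}`, which is itself within
`(1+γ')(a_{j₀} + Φ(j₀))` of `φ†`. Finally `max(a_{j₀}, Φ(j₀))` is at most `q^{-1/2}` times
`max(a_j, Φ(j))` for every `j`: at the balancing index one step of `Φ` costs at most `q^{-1/2}`.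
-/

theorem max_le_mul_max_of_forall_lt {a Φ : ℕ → ℝ} {s : ℝ} (ha : Antitone a) (hΦ : Monotone Φ)
    (hΦ0 : ∀ n, 0 ≤ Φ n) (hs : 1 ≤ s) (hstep : ∀ n, Φ (n + 1) ≤ s * Φ n) {j₀ j : ℕ}
    (hbefore : ∀ k < j₀, Φ k < a k) (hj : a j₀ ≤ Φ j₀ ∨ j ≤ j₀) :
    max (a j₀) (Φ j₀) ≤ s * max (a j) (Φ j) := by
  have hmax : max (a j) (Φ j) ≤ s * max (a j) (Φ j) :=
    le_mul_of_one_le_left ((hΦ0 j).trans (le_max_right _ _)) hs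
  rcases lt_or_ge j j₀ with hlt | hge
  · obtain ⟨m, rfl⟩ := Nat.exists_eq_add_of_lt hlt
    have haj : 0 ≤ a j := (hΦ0 j).trans (hbefore j hlt).le
    refine (max_le ?_ ?_).trans (mul_le_mul_of_nonneg_left (le_max_left _ _) (by linarith))
    · exact (ha hlt.le).trans (le_mul_of_one_le_left haj hs)
    · calc Φ (j + m + 1) ≤ s * Φ (j + m) := hstep _
        _ ≤ s * a j := by
            gcongr
            exact (hbefore _ (by omega)).le.trans (ha (Nat.le_add_right j m))
  · rcases hj with hbal | hle
    · rw [max_eq_right hbal]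
      exact (hΦ hge).trans ((le_max_right _ _).trans hmax)
    · rwa [le_antisymm hge hle]

section Lepski

variable {E : Type*} [SeminormedAddCommGroup E]

def lepskiSet (φ : ℕ → E) (τ : ℕ → ℝ) (Jmax : ℕ) : Set ℕ :=
  {j | j ≤ Jmax ∧ ∀ i, j ≤ i → i ≤ Jmax → ‖φ i - φ j‖ ≤ τ i}

theorem norm_sub_le_of_isLeast_lepskiSet {φ : ℕ → E} {τ : ℕ → ℝ} {Jmax J j : ℕ}
    (hJ : IsLeast (lepskiSet φ τ Jmax) J) (hj : j ∈ lepskiSet φ τ Jmax) (x : E) :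
    ‖φ J - x‖ ≤ τ j + ‖φ j - x‖ :=
  calc ‖φ J - x‖ ≤ ‖φ J - φ j‖ + ‖φ j - x‖ := norm_sub_le_norm_sub_add_norm_sub _ _ _
    _ = ‖φ j - φ J‖ + ‖φ j - x‖ := by rw [norm_sub_rev]
    _ ≤ τ j + ‖φ j - x‖ := by gcongr; exact hJ.1.2 j (hJ.2 hj) hj.1

theorem mem_lepskiSet_of_balanced {φ : ℕ → E} {x : E} {a Φ : ℕ → ℝ} {c : ℝ} {Jmax j₀ : ℕ}
    (ha : Antitone a) (hΦ : Monotone Φ) (hΦ0 : ∀ n, 0 ≤ Φ n) (hc : 0 ≤ c)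
    (herr : ∀ k ≤ Jmax, ‖φ k - x‖ ≤ c * (a k + Φ k))
    (hj₀ : j₀ ≤ Jmax) (hbal : a j₀ ≤ Φ j₀ ∨ j₀ = Jmax) :
    j₀ ∈ lepskiSet φ (fun i => 4 * c * Φ i) Jmax := by
  refine ⟨hj₀, fun i hi hiJ => ?_⟩
  rcases hbal with hbal | rfl
  · calc ‖φ i - φ j₀‖ ≤ ‖φ i - x‖ + ‖φ j₀ - x‖ := by
          simpa only [dist_eq_norm] using dist_triangle_right (φ i) (φ j₀) x
      _ ≤ c * (a i + Φ i) + c * (a j₀ + Φ j₀) := add_le_add (herr i hiJ) (herr j₀ hj₀)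
      _ ≤ c * (Φ i + Φ i) + c * (Φ i + Φ i) := by
          gcongr
          exacts [(ha hi).trans (hbal.trans (hΦ hi)), hbal.trans (hΦ hi), hΦ hi]
      _ = 4 * c * Φ i := by ring
  · rw [le_antisymm hiJ hi, sub_self, norm_zero]
    exact mul_nonneg (by positivity) (hΦ0 _)

theorem norm_sub_le_of_isLeast_lepskiSet_of_balancing {φ : ℕ → E} {x : E} {a Φ : ℕ → ℝ}
    {c s : ℝ} {Jmax J : ℕ}
    (ha : Antitone a) (ha0 : ∀ n, 0 ≤ a n) (hΦ : Monotone Φ) (hΦ0 : ∀ n, 0 ≤ Φ n)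
    (hs : 1 ≤ s) (hstep : ∀ n, Φ (n + 1) ≤ s * Φ n) (hc : 0 ≤ c)
    (herr : ∀ k ≤ Jmax, ‖φ k - x‖ ≤ c * (a k + Φ k))
    (hJ : IsLeast (lepskiSet φ (fun i => 4 * c * Φ i) Jmax) J) :
    ∀ j ≤ Jmax, ‖φ J - x‖ ≤ 6 * s * c * (a j + Φ j) := by
  intro j hj
  have hex : ∃ k, a k ≤ Φ k ∨ k = Jmax := ⟨Jmax, Or.inr rfl⟩
  set j₀ := Nat.find hex
  have hj₀ : j₀ ≤ Jmax := Nat.find_min' hex (Or.inr rfl)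
  have hbefore : ∀ k < j₀, Φ k < a k := fun k hk =>
    not_le.1 fun h => Nat.find_min hex hk (Or.inl h)
  have hmem := mem_lepskiSet_of_balanced ha hΦ hΦ0 hc herr hj₀ (Nat.find_spec hex)
  have hmax := max_le_mul_max_of_forall_lt ha hΦ hΦ0 hs hstep hbefore
    ((Nat.find_spec hex).imp_right fun h => h ▸ hj)
  calc ‖φ J - x‖ ≤ 4 * c * Φ j₀ + c * (a j₀ + Φ j₀) :=
        (norm_sub_le_of_isLeast_lepskiSet hJ hmem x).trans (by gcongr; exact herr j₀ hj₀)
    _ ≤ 6 * c * max (a j₀) (Φ j₀) := by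
        nlinarith [le_max_left (a j₀) (Φ j₀), le_max_right (a j₀) (Φ j₀)]
    _ ≤ 6 * c * (s * max (a j) (Φ j)) := by gcongr
    _ = 6 * s * c * max (a j) (Φ j) := by ring
    _ ≤ 6 * s * c * (a j + Φ j) := by
        gcongr
        exact max_le_add_of_nonneg (ha0 j) (hΦ0 j)

end Lepski

theorem stmt_16_general {H : Type*} [NormedAddCommGroup H]
    (q γ γ' : ℝ) (hγ'0 : 0 ≤ γ')
    (a Φ : ℕ → ℝ) (ha_nonneg : ∀ j, 0 ≤ a j) (hΦ_pos : ∀ j, 0 < Φ j)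
    (ha : ∀ j, a (j + 1) ≤ a j ∧ a j ≤ γ * a (j + 1))
    (hΦ : ∀ j, Φ j ≤ Φ (j + 1) ∧ Φ (j + 1) / Φ j ≤ q ^ (-(1 : ℝ) / 2))
    (φ : ℕ → H) (φdag : H) (Jmax : ℕ)
    (herr : ∀ j ≤ Jmax, ‖φ j - φdag‖ ≤ (1 + γ') * (a j + Φ j))
    (JLep : ℕ)
    (hJLep : IsLeast {j : ℕ | j ≤ Jmax ∧
      ∀ i : ℕ, j ≤ i → i ≤ Jmax → ‖φ i - φ j‖ ≤ 4 * (1 + γ') * Φ i} JLep) :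
    ∀ j ≤ Jmax, ‖φ JLep - φdag‖ ≤ 6 * q ^ (-(1 : ℝ) / 2) * (1 + γ') * (a j + Φ j) := by
  have hstep (n : ℕ) : Φ (n + 1) ≤ q ^ (-(1 : ℝ) / 2) * Φ n :=
    (div_le_iff₀ (hΦ_pos n)).1 (hΦ n).2
  have hs : 1 ≤ q ^ (-(1 : ℝ) / 2) :=
    ((one_le_div (hΦ_pos 0)).2 (hΦ 0).1).trans (hΦ 0).2
  exact norm_sub_le_of_isLeast_lepskiSet_of_balancing (antitone_nat_of_succ_le fun n => (ha n).1)
    ha_nonneg (monotone_nat_of_le_succ fun n => (hΦ n).1) (fun n => (hΦ_pos n).le) hs hstep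
    (by linarith) herr hJLep

/-- Lepskiĭ balancing principle: in a Hilbert space `H`, let `φ_j` (for `j ≤ J_max`)
satisfy `‖φ_j − φ†‖ ≤ (1+γ')(a_j + Φ(j))` with `a_j` nonincreasing, `a_j ≤ γ a_{j+1}`,
`Φ` increasing with `Φ(j+1)/Φ(j) ≤ q^{−1/2}` for `q ∈ (0,1)`, and `γ' ≤ 1`. If `J_Lep`
is the least `j ≤ J_max` such that `‖φ_i − φ_j‖ ≤ 4(1+γ')Φ(i)` for all `j ≤ i ≤ J_max`,
then `‖φ_{J_Lep} − φ†‖ ≤ 6 q^{−1/2} (1+γ') min_{j ≤ J_max}(a_j + Φ(j))`. -/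
theorem stmt_16 {H : Type*} [NormedAddCommGroup H] [InnerProductSpace ℝ H] [CompleteSpace H]
    (q γ γ' : ℝ) (hq0 : 0 < q) (hq1 : q < 1) (hγ'0 : 0 ≤ γ') (hγ'1 : γ' ≤ 1)
    (a Φ : ℕ → ℝ) (ha_nonneg : ∀ j, 0 ≤ a j) (hΦ_pos : ∀ j, 0 < Φ j)
    (ha : ∀ j, a (j + 1) ≤ a j ∧ a j ≤ γ * a (j + 1))
    (hΦ : ∀ j, Φ j ≤ Φ (j + 1) ∧ Φ (j + 1) / Φ j ≤ q ^ (-(1 : ℝ) / 2))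
    (φ : ℕ → H) (φdag : H) (Jmax : ℕ)
    (herr : ∀ j ≤ Jmax, ‖φ j - φdag‖ ≤ (1 + γ') * (a j + Φ j))
    (JLep : ℕ)
    (hJLep : IsLeast {j : ℕ | j ≤ Jmax ∧
      ∀ i : ℕ, j ≤ i → i ≤ Jmax → ‖φ i - φ j‖ ≤ 4 * (1 + γ') * Φ i} JLep) :
    ∀ j ≤ Jmax, ‖φ JLep - φdag‖ ≤ 6 * q ^ (-(1 : ℝ) / 2) * (1 + γ') * (a j + Φ j) :=
  stmt_16_general q γ γ' hγ'0 a Φ ha_nonneg hΦ_pos ha hΦ φ φdag Jmax herr JLep hJLep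
end
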